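/- If n ∈ ℕ is the number of independent sets of some tree T that is not a star, then n can be written as n = 2^t · a + b where t ≥ 1, and there exists a tree T' with a vertex x such that a = i(T') and b = i(T' − x); in particular b ≤ a ≤ 2b. -/

import Mathlib

/-!
A tree `T` that is not a star has a vertex `u` with a neighbour `w` such that every other
neighbour of `u` is a leaf, and there are `t ≥ 1` such leaves: take a vertex with two neighbours
as far as possible from a fixed root, and let `w` be its parent. Splitting the independent sets
according to whether they contain `u` gives `i(T) = i(T - u) + i(T - N[u])`. Deleting `u` leaves
the `t` isolated leaves next to the tree `T'` spanned by the remaining vertices, so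
`i(T - u) = 2 ^ t * i(T')`, while `T - N[u] = T' - w`. The same splitting at `w` inside `T'`
gives `i(T' - w) ≤ i(T') ≤ 2 * i(T' - w)`.
-/

open SimpleGraph

/-- The number of independent sets in a graph (including the empty set). -/
noncomputable def numIndepSets {V : Type*} (G : SimpleGraph V) : ℕ :=
  Nat.card {s : Set V // ∀ u ∈ s, ∀ v ∈ s, ¬ G.Adj u v}

namespace SimpleGraph

variable {V W : Type*} {G : SimpleGraph V}

/-- Counted by `i(G[A])` (`numIndepSets_induce`); subsets of `V` avoid nested subtypes. -/
def indepSetsIn (G : SimpleGraph V) (A : Set V) : Set (Set V) :=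
  {s | s ⊆ A ∧ ∀ u ∈ s, ∀ v ∈ s, ¬ G.Adj u v}

lemma ncard_indepSetsIn_univ (G : SimpleGraph V) :
    (G.indepSetsIn Set.univ).ncard = numIndepSets G :=
  Nat.card_congr (Equiv.subtypeEquivRight fun s => by simp [indepSetsIn])

lemma indepSetsIn_mono {A B : Set V} (h : A ⊆ B) : G.indepSetsIn A ⊆ G.indepSetsIn B :=
  fun _ hs => ⟨hs.1.trans h, hs.2⟩

lemma indepSetsIn_eq_powerset {A : Set V} (hA : ∀ u ∈ A, ∀ v ∈ A, ¬ G.Adj u v) :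
    G.indepSetsIn A = 𝒫 A :=
  Set.ext fun _ => ⟨And.left, fun hs => ⟨hs, fun u hu v hv => hA u (hs hu) v (hs hv)⟩⟩

lemma indepSetsIn_inter_setOf_notMem (A : Set V) (x : V) :
    G.indepSetsIn A ∩ {s | x ∉ s} = G.indepSetsIn (A \ {x}) := by
  ext s
  simp only [indepSetsIn, Set.mem_inter_iff, Set.mem_ofPred_eq, Set.subset_sdiff,
    Set.disjoint_singleton_right]
  tauto

lemma indepSetsIn_diff_setOf_notMem {A : Set V} {x : V} (hx : x ∈ A) :
    G.indepSetsIn A \ {s | x ∉ s} =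
      insert x '' G.indepSetsIn (A \ insert x (G.neighborSet x)) := by
  ext s
  constructor
  · rintro ⟨⟨hsA, hs⟩, hxs⟩
    simp only [Set.mem_ofPred_eq, not_not] at hxs
    refine ⟨s \ {x}, ⟨fun v hv => ⟨hsA hv.1, ?_⟩, fun u hu v hv => hs u hu.1 v hv.1⟩,
      Set.insert_sdiff_self_of_mem hxs⟩
    rintro (rfl | hxv)
    exacts [hv.2 rfl, hs x hxs v hv.1 hxv]
  · rintro ⟨t, ⟨htA, ht⟩, rfl⟩
    refine ⟨⟨Set.insert_subset hx fun v hv => (htA hv).1, ?_⟩, by simp⟩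
    have hxt : ∀ v ∈ t, ¬ G.Adj x v := fun v hv hxv => (htA hv).2 (Or.inr hxv)
    rintro u (rfl | hu) v (rfl | hv)
    exacts [G.irrefl, hxt v hv, fun h => hxt u hu h.symm, ht u hu v hv]

lemma ncard_indepSetsIn_eq_add [Finite V] {A : Set V} {x : V} (hx : x ∈ A) :
    (G.indepSetsIn A).ncard = (G.indepSetsIn (A \ {x})).ncard +
      (G.indepSetsIn (A \ insert x (G.neighborSet x))).ncard := by
  rw [← Set.ncard_inter_add_ncard_sdiff_eq_ncard _ {s | x ∉ s} (Set.toFinite _),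
    indepSetsIn_inter_setOf_notMem, indepSetsIn_diff_setOf_notMem hx, Set.InjOn.ncard_image]
  intro s hs t ht hst
  have hxr : ∀ {r}, r ∈ G.indepSetsIn (A \ insert x (G.neighborSet x)) → x ∉ r :=
    fun hr hmem => (hr.1 hmem).2 (Set.mem_insert x _)
  rw [← Set.insert_sdiff_self_of_notMem (hxr hs), hst, Set.insert_sdiff_self_of_notMem (hxr ht)]

lemma ncard_indepSetsIn_le_two_mul [Finite V] {A : Set V} {x : V} (hx : x ∈ A) :
    (G.indepSetsIn A).ncard ≤ 2 * (G.indepSetsIn (A \ {x})).ncard := by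
  rw [ncard_indepSetsIn_eq_add hx, two_mul]
  exact Nat.add_le_add_left (Set.ncard_le_ncard (indepSetsIn_mono
    (Set.sdiff_subset_sdiff_right (Set.singleton_subset_iff.2 (Set.mem_insert x _))))) _

lemma ncard_indepSetsIn_union {B C : Set V} (hBC : Disjoint B C)
    (hadj : ∀ b ∈ B, ∀ c ∈ C, ¬ G.Adj b c) :
    (G.indepSetsIn (B ∪ C)).ncard = (G.indepSetsIn B).ncard * (G.indepSetsIn C).ncard := by
  have hsplit : ∀ {p q : Set V}, p ⊆ B → q ⊆ C → (p ∪ q) ∩ B = p ∧ (p ∪ q) ∩ C = q := by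
    intro p q hp hq
    constructor <;> ext v <;> have := @hp v <;> have := @hq v <;>
      have : v ∈ B → v ∉ C := fun h => Set.disjoint_left.1 hBC h <;>
      simp only [Set.mem_inter_iff, Set.mem_union] <;> tauto
  have hinj : (G.indepSetsIn B ×ˢ G.indepSetsIn C).InjOn fun p => p.1 ∪ p.2 := by
    rintro ⟨p, q⟩ ⟨hp, hq⟩ ⟨p', q'⟩ ⟨hp', hq'⟩ (h : p ∪ q = p' ∪ q')
    obtain ⟨h₁, h₂⟩ := hsplit hp.1 hq.1
    obtain ⟨h₁', h₂'⟩ := hsplit hp'.1 hq'.1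
    rw [h] at h₁ h₂
    exact Prod.ext (h₁.symm.trans h₁') (h₂.symm.trans h₂')
  have himage : (fun p => p.1 ∪ p.2) '' (G.indepSetsIn B ×ˢ G.indepSetsIn C) =
      G.indepSetsIn (B ∪ C) := by
    ext s
    constructor
    · rintro ⟨⟨p, q⟩, ⟨⟨hpB, hp⟩, hqC, hq⟩, rfl⟩
      refine ⟨Set.union_subset_union hpB hqC, ?_⟩
      rintro u (hu | hu) v (hv | hv)
      exacts [hp u hu v hv, hadj u (hpB hu) v (hqC hv),
        fun h => hadj v (hpB hv) u (hqC hu) h.symm, hq u hu v hv]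
    · rintro ⟨hs, hind⟩
      refine ⟨(s ∩ B, s ∩ C), ⟨⟨Set.inter_subset_right, fun u hu v hv => hind u hu.1 v hv.1⟩,
        Set.inter_subset_right, fun u hu v hv => hind u hu.1 v hv.1⟩, ?_⟩
      simp only [← Set.inter_union_distrib_left, Set.inter_eq_left.2 hs]
  rw [← himage, hinj.ncard_image, Set.ncard_prod]

lemma indepSetsIn_image_val (A : Set V) (B : Set A) :
    G.indepSetsIn (Subtype.val '' B) = Set.image Subtype.val '' (G.induce A).indepSetsIn B := by
  ext s
  constructor
  · rintro ⟨hsB, hs⟩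
    refine ⟨Subtype.val ⁻¹' s, ⟨fun v hv => ?_, fun u hu v hv => hs u hu v hv⟩,
      Set.image_preimage_eq_of_subset (hsB.trans (Set.image_subset_range _ _))⟩
    exact Subtype.val_injective.mem_set_image.1 (hsB hv)
  · rintro ⟨t, ⟨htB, ht⟩, rfl⟩
    refine ⟨Set.image_mono htB, ?_⟩
    rintro _ ⟨u, hu, rfl⟩ _ ⟨v, hv, rfl⟩
    exact ht u hu v hv

lemma ncard_indepSetsIn_induce (A : Set V) (B : Set A) :
    ((G.induce A).indepSetsIn B).ncard = (G.indepSetsIn (Subtype.val '' B)).ncard := by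
  rw [indepSetsIn_image_val, Set.ncard_image_of_injective _ Subtype.val_injective.image_injective]

lemma numIndepSets_induce (A : Set V) : numIndepSets (G.induce A) = (G.indepSetsIn A).ncard := by
  rw [← ncard_indepSetsIn_univ, ncard_indepSetsIn_induce, Set.image_univ, Subtype.range_coe]

lemma numIndepSets_induce_induce_ne {S : Set V} {w : V} (hw : w ∈ S) :
    numIndepSets ((G.induce S).induce {y | y ≠ ⟨w, hw⟩}) = (G.indepSetsIn (S \ {w})).ncard := by
  rw [numIndepSets_induce, ncard_indepSetsIn_induce]
  congr
  ext v
  simp [and_comm]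

lemma numIndepSets_induce_ne_le [Finite V] (x : V) :
    numIndepSets (G.induce {y | y ≠ x}) ≤ numIndepSets G := by
  rw [numIndepSets_induce, ← ncard_indepSetsIn_univ]
  exact Set.ncard_le_ncard (indepSetsIn_mono (Set.subset_univ _))

lemma numIndepSets_le_two_mul_induce_ne [Finite V] (x : V) :
    numIndepSets G ≤ 2 * numIndepSets (G.induce {y | y ≠ x}) := by
  rw [numIndepSets_induce, ← ncard_indepSetsIn_univ]
  convert ncard_indepSetsIn_le_two_mul (G := G) (Set.mem_univ x) using 4
  ext
  simp

lemma Iso.numIndepSets_eq {H : SimpleGraph W} (e : G ≃g H) : numIndepSets G = numIndepSets H := by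
  refine Nat.card_congr (Equiv.subtypeEquiv (Equiv.Set.congr e.toEquiv) fun s => ?_)
  constructor
  · rintro hs _ ⟨u, hu, rfl⟩ _ ⟨v, hv, rfl⟩ huv
    exact hs u hu v hv (e.map_adj_iff.1 huv)
  · exact fun hs u hu v hv huv => hs (e u) ⟨u, hu, rfl⟩ (e v) ⟨v, hv, rfl⟩ (e.map_adj_iff.2 huv)

lemma Iso.numIndepSets_induce_ne {H : SimpleGraph W} (e : G ≃g H) (x : V) :
    numIndepSets (G.induce {y | y ≠ x}) = numIndepSets (H.induce {y | y ≠ e x}) :=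
  (e.induce (e.toEquiv.bijOn fun _ => e.apply_eq_iff_eq.not)).numIndepSets_eq

lemma exists_iso_of_finite [Finite V] (G : SimpleGraph V) :
    ∃ (W : Type) (_ : Fintype W) (G' : SimpleGraph W), Nonempty (G' ≃g G) :=
  ⟨_, inferInstance, _, ⟨(Iso.map (Finite.equivFin V) G).symm⟩⟩

lemma IsTree.exists_adj_adj_of_ne_starGraph (hG : G.IsTree) (hstar : ∀ r, G ≠ starGraph r) :
    ∃ v y z, y ≠ z ∧ G.Adj v y ∧ G.Adj v z := by
  by_contra! h
  obtain ⟨r⟩ := hG.connected.nonempty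
  have hr : ∀ v ≠ r, G.Adj r v := by
    intro v hv
    obtain ⟨p, hp⟩ := hG.connected.exists_isPath r v
    cases p with
    | nil => exact (hv rfl).elim
    | cons hrx q =>
      cases q with
      | nil => exact hrx
      | @cons _ z _ hxz q =>
        by_cases hzr : z = r
        · subst hzr
          simp [Walk.cons_isPath_iff] at hp
        · exact (h _ _ _ hzr hxz hrx.symm).elim
  refine hstar r (SimpleGraph.ext ?_)
  ext x y
  rw [starGraph_adj]
  refine ⟨fun hxy => ⟨hxy.ne, ?_⟩, ?_⟩
  · by_contra! hne
    exact h x y r hne.2 hxy (hr x hne.1).symm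
  · rintro ⟨hxy, rfl | rfl⟩
    exacts [hr y hxy.symm, (hr x hxy).symm]

lemma nonempty_starGraph_iso [Finite V] (r : V) :
    Nonempty (starGraph r ≃g completeBipartiteGraph (Fin 1) (Fin (Nat.card {v // v ≠ r}))) := by
  classical
  let e : completeBipartiteGraph {v // v = r} {v // v ≠ r} ≃g starGraph r :=
    { Equiv.sumCompl (· = r) with
      map_rel_iff' := by
        rintro (⟨a, rfl⟩ | ⟨a, ha⟩) (⟨b, rfl⟩ | ⟨b, hb⟩) <;>
          simp only [Equiv.sumCompl_apply_inl, Equiv.sumCompl_apply_inr, starGraph_adj,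
            completeBipartiteGraph_adj, Sum.isLeft_inl, Sum.isLeft_inr, Sum.isRight_inl,
            Sum.isRight_inr] <;> grind }
  exact ⟨e.symm.trans (completeBipartiteGraphCongr (Equiv.ofUnique _ _) (Finite.equivFin _))⟩

lemma IsTree.eq_of_adj_of_dist_lt (hG : G.IsTree) (r : V) {u y₁ y₂ : V} (h₁ : G.Adj u y₁)
    (h₂ : G.Adj u y₂) (hd₁ : G.dist r y₁ < G.dist r u) (hd₂ : G.dist r y₂ < G.dist r u) :
    y₁ = y₂ := by
  have key : ∀ y, G.Adj u y → G.dist r y < G.dist r u → ∃ p : G.Path r u, p.1.penultimate = y := by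
    intro y hy hd
    obtain ⟨q, -, hq⟩ := (hG.connected r y).exists_path_of_dist
    have hdist : G.dist r u = G.dist r y + 1 := by
      have := hG.dist_eq_dist_add_one_of_adj r hy
      omega
    exact ⟨⟨q.concat hy.symm, (q.concat hy.symm).isPath_of_length_eq_dist (by simp [hq, hdist])⟩,
      q.penultimate_concat _⟩
  obtain ⟨p₁, rfl⟩ := key y₁ h₁ hd₁
  obtain ⟨p₂, rfl⟩ := key y₂ h₂ hd₂
  rw [(hG.isAcyclic.subsingleton_path r u).elim p₁ p₂]

lemma IsTree.exists_adj_forall_neighborSet_subset [Finite V] (hG : G.IsTree)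
    (hbranch : ∃ v y z, y ≠ z ∧ G.Adj v y ∧ G.Adj v z) :
    ∃ u w, G.Adj u w ∧ (G.neighborSet u \ {w}).Nonempty ∧
      ∀ y ∈ G.neighborSet u \ {w}, G.neighborSet y ⊆ {u} := by
  obtain ⟨r⟩ : Nonempty V := hG.connected.nonempty
  obtain ⟨u, ⟨y₀, z₀, hyz, hy₀, hz₀⟩, hmax⟩ := Set.exists_max_image
    {v | ∃ y z, y ≠ z ∧ G.Adj v y ∧ G.Adj v z} (G.dist r) (Set.toFinite _) hbranch
  have hleaf : ∀ y, G.Adj u y → G.dist r u < G.dist r y → G.neighborSet y ⊆ {u} := by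
    intro y huy hd z hyz
    by_contra hzu
    exact (hmax y ⟨z, u, hzu, hyz, huy.symm⟩).not_gt hd
  -- `w` is the parent of `u` towards `r`, or any neighbour of `u` if `u = r`.
  obtain ⟨w, huw, hw⟩ : ∃ w, G.Adj u w ∧ ∀ y, G.Adj u y → y ≠ w → G.dist r u < G.dist r y := by
    by_cases hparent : ∃ p, G.Adj u p ∧ G.dist r p < G.dist r u
    · obtain ⟨p, hup, hp⟩ := hparent
      refine ⟨p, hup, fun y huy hyp => ?_⟩
      have := hG.dist_ne_of_adj r huy
      have : ¬ G.dist r y < G.dist r u := fun hy => hyp (hG.eq_of_adj_of_dist_lt r huy hup hy hp)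
      omega
    · push Not at hparent
      exact ⟨y₀, hy₀, fun y huy _ => (hparent y huy).lt_of_ne (hG.dist_ne_of_adj r huy)⟩
  refine ⟨u, w, huw, ?_, fun y hy => hleaf y hy.1 (hw y hy.1 hy.2)⟩
  by_cases h : y₀ = w
  · exact ⟨z₀, hz₀, fun hz => hyz (h.trans hz.symm)⟩
  · exact ⟨y₀, hy₀, h⟩

lemma Connected.induce_of_forall_adj_eq {S : Set V} {w : V} (hG : G.Connected) (hw : w ∈ S)
    (h : ∀ x ∈ S, ∀ y ∉ S, G.Adj x y → x = w) : (G.induce S).Connected := by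
  -- Every excursion of a walk outside `S` leaves and re-enters `S` through `w`.
  have key : ∀ {c v : V} (p : G.Walk c v) (hv : v ∈ S),
      (∀ hc : c ∈ S, (G.induce S).Reachable ⟨c, hc⟩ ⟨v, hv⟩) ∧
        (c ∉ S → (G.induce S).Reachable ⟨w, hw⟩ ⟨v, hv⟩) := by
    intro c v p hv
    induction p with
    | nil => exact ⟨fun _ => .rfl, fun hc => (hc hv).elim⟩
    | @cons c d v hcd q ih =>
      obtain ⟨ih₁, ih₂⟩ := ih hv
      by_cases hd : d ∈ S
      · refine ⟨fun hc => ?_, fun hc => ?_⟩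
        · exact (show (G.induce S).Adj ⟨c, hc⟩ ⟨d, hd⟩ from hcd).reachable.trans (ih₁ hd)
        · obtain rfl := h d hd c hc hcd.symm
          exact ih₁ hd
      · refine ⟨fun hc => ?_, fun _ => ih₂ hd⟩
        obtain rfl := h c hc d hd hcd
        exact ih₂ hd
  have hreach : ∀ c : S, (G.induce S).Reachable c ⟨w, hw⟩ := fun ⟨c, hc⟩ =>
    (key (hG.preconnected c w).some hw).1 hc
  exact (connected_iff _).2 ⟨fun a b => (hreach a).trans (hreach b).symm, ⟨⟨w, hw⟩⟩⟩

lemma mem_compl_insert_neighborSet_sdiff {u w : V} (huw : G.Adj u w) :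
    w ∈ (insert u (G.neighborSet u \ {w}))ᶜ := by
  simp [huw.ne']

lemma IsTree.induce_compl_insert_neighborSet_sdiff (hG : G.IsTree) {u w : V} (huw : G.Adj u w)
    (hleaf : ∀ y ∈ G.neighborSet u \ {w}, G.neighborSet y ⊆ {u}) :
    (G.induce (insert u (G.neighborSet u \ {w}))ᶜ).IsTree := by
  refine ⟨hG.connected.induce_of_forall_adj_eq (mem_compl_insert_neighborSet_sdiff huw) ?_,
    hG.isAcyclic.induce _⟩
  intro x hx y hy hxy
  rcases Set.notMem_compl_iff.1 hy with rfl | hy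
  · by_contra hxw
    exact hx (Set.mem_insert_of_mem _ ⟨hxy.symm, hxw⟩)
  · exact (hx (Set.mem_insert_iff.2 (Or.inl (hleaf y hy hxy.symm)))).elim

lemma numIndepSets_eq_two_pow_mul_add [Finite V] {u w : V} (huw : G.Adj u w)
    (hleaf : ∀ y ∈ G.neighborSet u \ {w}, G.neighborSet y ⊆ {u}) :
    numIndepSets G = 2 ^ (G.neighborSet u \ {w}).ncard *
      (G.indepSetsIn (insert u (G.neighborSet u \ {w}))ᶜ).ncard +
        (G.indepSetsIn ((insert u (G.neighborSet u \ {w}))ᶜ \ {w})).ncard := by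
  set L := G.neighborSet u \ {w}
  have hL : ∀ y ∈ L, ∀ z, G.Adj y z → z = u := fun y hy _ hz => hleaf y hy hz
  have h₁ : Set.univ \ {u} = L ∪ (insert u L)ᶜ := by
    ext v
    have : G.Adj u v → u ≠ v := fun h => h.ne
    simp only [Set.mem_sdiff, Set.mem_univ, Set.mem_singleton_iff, true_and, Set.mem_union,
      mem_neighborSet, Set.mem_compl_iff, Set.mem_insert_iff, not_or, not_and, not_not, L]
    tauto
  have h₂ : Set.univ \ insert u (G.neighborSet u) = (insert u L)ᶜ \ {w} := by
    ext v
    have : v = w → G.Adj u v := fun h => h ▸ huw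
    simp only [Set.mem_sdiff, Set.mem_univ, Set.mem_insert_iff, mem_neighborSet, not_or, true_and,
      Set.mem_compl_iff, Set.mem_singleton_iff, not_and, not_not, L]
    tauto
  rw [← ncard_indepSetsIn_univ, ncard_indepSetsIn_eq_add (Set.mem_univ u), h₁, h₂,
    ncard_indepSetsIn_union, indepSetsIn_eq_powerset, Set.ncard_powerset]
  · exact fun a ha b hb hab => hb.1.ne (hL a ha b hab).symm
  · exact Set.disjoint_compl_right_iff_subset.2 (Set.subset_insert _ _)
  · exact fun b hb c hc hbc => hc (hL b hb c hbc ▸ Set.mem_insert _ _)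

end SimpleGraph

theorem stmt15 {V : Type*} [Fintype V] (T : SimpleGraph V) (hT : T.IsTree)
    (hstar : ∀ m : ℕ, ¬ Nonempty (T ≃g completeBipartiteGraph (Fin 1) (Fin m)))
    (n : ℕ) (hn : numIndepSets T = n) :
    ∃ (t a b : ℕ), 1 ≤ t ∧ n = 2 ^ t * a + b ∧ b ≤ a ∧ a ≤ 2 * b ∧
      ∃ (W : Type) (_ : Fintype W) (T' : SimpleGraph W) (x : W),
        T'.IsTree ∧ a = numIndepSets T' ∧
          b = numIndepSets (SimpleGraph.induce {y : W | y ≠ x} T') := by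
  obtain ⟨u, w, huw, hL, hleaf⟩ := hT.exists_adj_forall_neighborSet_subset <|
    hT.exists_adj_adj_of_ne_starGraph fun r hr => hstar _ (hr ▸ nonempty_starGraph_iso r)
  have hwS := mem_compl_insert_neighborSet_sdiff huw
  obtain ⟨W, _, T', ⟨e⟩⟩ := exists_iso_of_finite (T.induce (insert u (T.neighborSet u \ {w}))ᶜ)
  refine ⟨_, _, _, (Set.ncard_pos (Set.toFinite _)).2 hL, ?_, numIndepSets_induce_ne_le _,
    numIndepSets_le_two_mul_induce_ne _, W, ‹_›, T', e.symm ⟨w, hwS⟩,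
    e.isTree_iff.2 (hT.induce_compl_insert_neighborSet_sdiff huw hleaf), rfl, rfl⟩
  rw [← hn, numIndepSets_eq_two_pow_mul_add huw hleaf, e.numIndepSets_eq,
    e.numIndepSets_induce_ne, e.apply_symm_apply, numIndepSets_induce,
    numIndepSets_induce_induce_ne hwS]
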